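/- Over a field k, every indecomposable representation of the linearly oriented A_n quiver (arrows i → i−1 for 2 ≤ i ≤ n) is an interval module M[a,b] (k at vertices a ≤ i ≤ b, identity maps in between, zero elsewhere), and each such M[a,b] has endomorphism ring isomorphic to k. In particular there are exactly n(n+1)/2 isomorphism classes of indecomposable representations. -/
import Mathlib


/-- A representation of the linearly oriented A_n quiver (arrows i → i-1 for
2 ≤ i ≤ n) over a field k: vector spaces V 1, …, V n and linear maps
g i : V (i+1) → V i for 1 ≤ i ≤ n-1. -/
structure AnRep (k : Type) [Field k] (n : ℕ) where
  V : ℕ → Type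
  [acg : ∀ i, AddCommGroup (V i)]
  [mod : ∀ i, Module k (V i)]
  fd : ∀ i, FiniteDimensional k (V i)
  supp : ∀ i, (i = 0 ∨ n < i) → Subsingleton (V i)
  g : ∀ i, 1 ≤ i → i + 1 ≤ n → (V (i+1) →ₗ[k] V i)

attribute [instance] AnRep.acg AnRep.mod

variable {k : Type} [Field k] {n : ℕ}

/-- An endomorphism of a representation of linear A_n. -/
structure AnEnd (M : AnRep k n) where
  f : ∀ i, M.V i →ₗ[k] M.V i
  comm : ∀ i (h1 : 1 ≤ i) (h2 : i + 1 ≤ n),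
    f i ∘ₗ M.g i h1 h2 = M.g i h1 h2 ∘ₗ f (i+1)

/-- A family of subspaces closed under the arrow maps. -/
def AnSubrep (M : AnRep k n) (p : ∀ i, Submodule k (M.V i)) : Prop :=
  ∀ i (h1 : 1 ≤ i) (h2 : i + 1 ≤ n), ∀ x ∈ p (i+1), M.g i h1 h2 x ∈ p i

/-- Indecomposability: nonzero and no splitting into two nonzero complementary
subrepresentations. -/
def AnIndec (M : AnRep k n) : Prop :=
  (∃ i, ∃ x : M.V i, x ≠ 0) ∧
  ∀ p q, AnSubrep M p → AnSubrep M q → (∀ i, IsCompl (p i) (q i)) →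
    (∀ i, p i = ⊥) ∨ (∀ i, q i = ⊥)

/-- M is (isomorphic to) the interval module M[a,b]: one-dimensional exactly at
the vertices in [a,b], zero elsewhere, with the maps inside the interval
bijective (hence identities in suitable bases). -/
def IsInterval (M : AnRep k n) (a b : ℕ) : Prop :=
  (∀ i, Module.finrank k (M.V i) = if a ≤ i ∧ i ≤ b then 1 else 0) ∧
  ∀ i (h1 : 1 ≤ i) (h2 : i + 1 ≤ n), a ≤ i → i + 1 ≤ b →
    Function.Bijective (M.g i h1 h2)

noncomputable def Gm (M : AnRep k n) (i : ℕ) : M.V (i+1) →ₗ[k] M.V i :=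
  if h : 1 ≤ i ∧ i + 1 ≤ n then M.g i h.1 h.2 else 0

lemma Gm_eq (M : AnRep k n) (i : ℕ) (h1 : 1 ≤ i) (h2 : i+1 ≤ n) :
    Gm M i = M.g i h1 h2 := dif_pos ⟨h1, h2⟩

noncomputable def Fc (M : AnRep k n) (a : ℕ) : (m : ℕ) → (M.V (a+m) →ₗ[k] M.V a)
  | 0 => LinearMap.id
  | (m+1) => (Fc M a m).comp (Gm M (a+m))

lemma LA {V A : Type} [AddCommGroup V] [Module k V] [AddCommGroup A] [Module k A]
    (f : V →ₗ[k] A) (wv : V) (wa : A) (hf : f wv = wa) (hwa : wa ≠ 0)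
    (S0 : Submodule k V) (hS0 : ∀ x ∈ S0, f x ∈ Submodule.span k {wa} → f x = 0) :
    ∃ Q : Submodule k V, S0 ≤ Q ∧ IsCompl (Submodule.span k {wv}) Q ∧
      ∀ x ∈ Q, f x ∈ Submodule.span k {wa} → f x = 0 := by
  set S : Submodule k V := S0 ⊔ LinearMap.ker f with hSdef
  have hSprop : ∀ x ∈ S, f x ∈ Submodule.span k {wa} → f x = 0 := by
    intro x hx hmem
    obtain ⟨s, hs, t, ht, rfl⟩ := Submodule.mem_sup.mp hx
    have hft : f t = 0 := ht
    rw [map_add, hft, add_zero] at hmem ⊢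
    exact hS0 s hs hmem
  obtain ⟨U, hU⟩ := Submodule.exists_isCompl (S ⊔ Submodule.span k {wv})
  have hprop : ∀ x ∈ S ⊔ U, f x ∈ Submodule.span k {wa} → f x = 0 := by
    intro x hx hmem
    obtain ⟨s, hs, u, hu, rfl⟩ := Submodule.mem_sup.mp hx
    obtain ⟨c, hc⟩ := Submodule.mem_span_singleton.mp hmem
    have hker : (s + u) - c • wv ∈ LinearMap.ker f := by
      rw [LinearMap.mem_ker, map_sub, map_smul, hf, ← hc, sub_self]
    have husv : u ∈ S ⊔ Submodule.span k {wv} := by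
      have h1 : ((s+u) - c • wv) ∈ S := Submodule.mem_sup_right hker
      have heq : u = ((((s+u) - c • wv)) - s) + c • wv := by abel
      rw [heq]
      exact Submodule.add_mem _
        (Submodule.mem_sup_left (Submodule.sub_mem _ h1 hs))
        (Submodule.mem_sup_right (Submodule.smul_mem _ _ (Submodule.mem_span_singleton_self _)))
    have hu0 : u = 0 := Submodule.disjoint_def.mp hU.disjoint u husv hu
    rw [hu0, add_zero] at hmem ⊢
    exact hSprop s hs hmem
  refine ⟨S ⊔ U, le_trans le_sup_left le_sup_left, ⟨?_, ?_⟩, hprop⟩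
  · rw [Submodule.disjoint_def]
    intro x hxspan hxQ
    obtain ⟨c, hc⟩ := Submodule.mem_span_singleton.mp hxspan
    have hfx : f x ∈ Submodule.span k {wa} := by
      rw [← hc, map_smul, hf]
      exact Submodule.smul_mem _ _ (Submodule.mem_span_singleton_self _)
    have h0 := hprop x hxQ hfx
    rw [← hc, map_smul, hf] at h0
    rcases smul_eq_zero.mp h0 with h | h
    · rw [← hc, h, zero_smul]
    · exact absurd h hwa
  · rw [codisjoint_iff]
    have hcd := hU.codisjoint
    rw [codisjoint_iff] at hcd
    rw [← hcd, ← sup_assoc, sup_comm (Submodule.span k {wv}) S]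

lemma indec_interval (M : AnRep k n) (hM : AnIndec M) :
    ∃ a b, 1 ≤ a ∧ a ≤ b ∧ b ≤ n ∧ IsInterval M a b := by
  classical
  obtain ⟨i0, x0, hx0⟩ := hM.1
  have hi0n : 1 ≤ i0 ∧ i0 ≤ n := by
    by_contra h
    haveI := M.supp i0 (by omega)
    exact hx0 (Subsingleton.elim _ _)
  -- the top of the support
  set S : Finset ℕ := (Finset.range (n+1)).filter (fun i => ∃ x : M.V i, x ≠ 0) with hSdef
  have hi0S : i0 ∈ S := Finset.mem_filter.mpr ⟨Finset.mem_range.mpr (by omega), ⟨x0, hx0⟩⟩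
  set b := S.max' ⟨i0, hi0S⟩ with hbdef
  have hbS : b ∈ S := S.max'_mem _
  obtain ⟨v, hv⟩ : ∃ x : M.V b, x ≠ 0 := (Finset.mem_filter.mp hbS).2
  have hbn : b ≤ n := by
    have := Finset.mem_range.mp (Finset.mem_filter.mp hbS).1; omega
  have hb1 : 1 ≤ b := by
    rcases Nat.eq_zero_or_pos b with h | h
    · exfalso; apply hv; haveI := M.supp b (Or.inl h); exact Subsingleton.elim _ _
    · exact h
  have hbig : ∀ j, b < j → ∀ x : M.V j, x = 0 := by
    intro j hj x
    by_cases hjn : j ≤ n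
    · by_contra hne
      have hjS : j ∈ S := Finset.mem_filter.mpr ⟨Finset.mem_range.mpr (by omega), ⟨x, hne⟩⟩
      exact absurd (Finset.le_max' S j hjS) (by omega)
    · haveI := M.supp j (by omega); exact Subsingleton.elim _ _
  -- the string of vectors w
  have hwex : ∀ m, ∃ w : ∀ i, M.V i, w b = v ∧
      (∀ i, b - m ≤ i → i < b → w i = Gm M i (w (i+1))) ∧
      (∀ i, i < b - m → w i = 0) ∧ (∀ i, b < i → w i = 0) := by
    intro m
    induction m with
    | zero =>
      refine ⟨Function.update (fun i => (0 : M.V i)) b v, ?_, ?_, ?_, ?_⟩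
      · simp
      · intro i h1 h2; omega
      · intro i h1
        rw [Function.update_of_ne (by omega)]
      · intro i h1
        rw [Function.update_of_ne (by omega)]
    | succ m ih =>
      obtain ⟨w, hwb, hmid, hlow, hhigh⟩ := ih
      by_cases hcase : b - (m+1) = b - m
      · exact ⟨w, hwb, fun i h1 h2 => hmid i (by omega) h2, fun i h1 => hlow i (by omega), hhigh⟩
      · have hj : b - (m+1) + 1 = b - m := by omega
        have hjb : b - (m+1) < b := by omega
        refine ⟨Function.update w (b - (m+1)) (Gm M (b - (m+1)) (w (b - (m+1) + 1))), ?_, ?_, ?_, ?_⟩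
        · rw [Function.update_of_ne (by omega)]; exact hwb
        · intro i h1 h2
          rcases eq_or_lt_of_le h1 with heq | hlt
          · subst heq
            rw [Function.update_self, Function.update_of_ne (by omega)]
          · rw [Function.update_of_ne (by omega), Function.update_of_ne (by omega)]
            exact hmid i (by omega) h2
        · intro i h1
          rw [Function.update_of_ne (by omega)]
          exact hlow i (by omega)
        · intro i h1
          rw [Function.update_of_ne (by omega)]
          exact hhigh i h1
  obtain ⟨w, hwb, hmid, _, hwhigh⟩ := hwex b
  have hw2 : ∀ i, i < b → w i = Gm M i (w (i+1)) := fun i hi => hmid i (by omega) hi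
  -- zero propagates downward
  have hdown : ∀ i, i ≤ b → w i = 0 → ∀ t, w (i - t) = 0 := by
    intro i hib h0 t
    induction t with
    | zero => exact h0
    | succ t IH =>
      rcases Nat.eq_zero_or_pos (i - t) with hz | hpos
      · rw [show i - (t+1) = i - t by omega]; exact IH
      · have IH' : w (i - (t+1) + 1) = 0 := by
          rw [show i - t = i - (t+1) + 1 by omega] at IH
          exact IH
        rw [hw2 (i - (t+1)) (by omega), IH', map_zero]
  -- bottom of the support of w
  set A : Finset ℕ := (Finset.range (b+1)).filter (fun i => w i ≠ 0) with hAdef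
  have hbA : b ∈ A := Finset.mem_filter.mpr ⟨Finset.mem_range.mpr (by omega), by rw [hwb]; exact hv⟩
  set a := A.min' ⟨b, hbA⟩ with hadef
  have haA : a ∈ A := A.min'_mem _
  have hwa : w a ≠ 0 := (Finset.mem_filter.mp haA).2
  have hab : a ≤ b := A.min'_le b hbA
  have hmin : ∀ j, j < a → w j = 0 := by
    intro j hj
    by_contra hne
    have : j ∈ A := Finset.mem_filter.mpr ⟨Finset.mem_range.mpr (by omega), hne⟩
    exact absurd (A.min'_le j this) (by omega)
  have ha1 : 1 ≤ a := by
    rcases Nat.eq_zero_or_pos a with h | h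
    · exfalso; apply hwa; rw [h]; haveI := M.supp 0 (Or.inl rfl); exact Subsingleton.elim _ _
    · exact h
  have hnonzero : ∀ j, a ≤ j → j ≤ b → w j ≠ 0 := by
    intro j h1 h2 h0
    have := hdown j h2 h0 (j - a)
    rw [show j - (j - a) = a by omega] at this
    exact hwa this
  -- compatibility of the composite maps with w
  have Fw : ∀ j m, j + m ≤ b → Fc M j m (w (j + m)) = w j := by
    intro j m
    induction m with
    | zero => intro _; rfl
    | succ m IH =>
      intro h
      have hg : Gm M (j+m) (w (j+m+1)) = w (j+m) := (hw2 (j+m) (by omega)).symm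
      calc Fc M j (m+1) (w (j+(m+1)))
          = Fc M j m (Gm M (j+m) (w (j+m+1))) := rfl
        _ = Fc M j m (w (j+m)) := by rw [hg]
        _ = w j := IH (by omega)
  obtain ⟨m₀, hm₀⟩ : ∃ m₀, b = a + m₀ := ⟨b - a, by omega⟩
  -- main downward construction of the complement
  have main : ∀ t, t ≤ m₀ → ∃ q : ∀ i, Submodule k (M.V i),
      (∀ i, a + (m₀ - t) ≤ i → i < b → ∀ x ∈ q (i+1), Gm M i x ∈ q i) ∧
      (∀ i, a + (m₀ - t) ≤ i → i ≤ b → IsCompl (Submodule.span k {w i}) (q i)) ∧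
      (∀ x ∈ q (a + (m₀ - t)), Fc M a (m₀ - t) x ∈ Submodule.span k {w a} →
        Fc M a (m₀ - t) x = 0) := by
    intro t
    induction t with
    | zero =>
      intro _
      simp only [Nat.sub_zero]
      obtain ⟨Q, _, hcompl, hQ⟩ := LA (Fc M a m₀) (w (a+m₀)) (w a)
        (Fw a m₀ (by omega)) hwa ⊥
        (by intro x hx _; rw [(Submodule.mem_bot _).mp hx]; exact map_zero _)
      refine ⟨Function.update (fun i => (⊤ : Submodule k (M.V i))) (a+m₀) Q, ?_, ?_, ?_⟩
      · intro i hi hib; exfalso; omega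
      · intro i hi hib
        obtain rfl : i = a + m₀ := by omega
        rw [Function.update_self]
        exact hcompl
      · simp only [Function.update_self]
        exact hQ
    | succ t ih =>
      intro ht
      obtain ⟨q, hS1, hS2, hS3⟩ := ih (by omega)
      have hmm : m₀ - t = (m₀ - (t+1)) + 1 := by omega
      rw [hmm] at hS1 hS2 hS3
      set m := m₀ - (t+1) with hm
      have hamb : a + m ≤ b := by omega
      obtain ⟨Q, hS0Q, hcompl, hQ⟩ := LA (Fc M a m) (w (a+m)) (w a)
        (Fw a m hamb) hwa (Submodule.map (Gm M (a+m)) (q (a+m+1)))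
        (by
          rintro x ⟨y, hy, rfl⟩ hmem
          exact hS3 y hy hmem)
      refine ⟨Function.update q (a+m) Q, ?_, ?_, ?_⟩
      · intro i hi hib x hx
        rcases eq_or_lt_of_le hi with heq | hlt
        · subst heq
          rw [Function.update_of_ne (by omega)] at hx
          rw [Function.update_self]
          exact hS0Q (Submodule.mem_map_of_mem hx)
        · rw [Function.update_of_ne (by omega)] at hx
          rw [Function.update_of_ne (by omega)]
          exact hS1 i (by omega) hib x hx
      · intro i hi hib
        rcases eq_or_lt_of_le hi with heq | hlt
        · subst heq
          rw [Function.update_self]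
          exact hcompl
        · rw [Function.update_of_ne (by omega)]
          exact hS2 i (by omega) hib
      · simp only [Function.update_self]
        exact hQ
  have hmain := main m₀ le_rfl
  rw [Nat.sub_self] at hmain
  obtain ⟨q, hq1, hq2, _⟩ := hmain
  -- the two complementary subrepresentations
  have hsubp : AnSubrep M (fun i => Submodule.span k {w i}) := by
    intro i h1 h2 x hx
    rw [Submodule.mem_span_singleton] at hx
    obtain ⟨c, rfl⟩ := hx
    rw [← Gm_eq M i h1 h2, map_smul]
    rcases lt_or_ge i b with hib | hib
    · rw [← hw2 i hib]
      exact Submodule.smul_mem _ _ (Submodule.mem_span_singleton_self _)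
    · rw [hwhigh (i+1) (by omega), map_zero, smul_zero]
      exact Submodule.zero_mem _
  have hsubq : AnSubrep M (fun i => if a ≤ i ∧ i ≤ b then q i else ⊤) := by
    intro i h1 h2 x hx
    rcases le_or_gt (i+1) b with h3 | h3
    · by_cases h4 : a ≤ i
      · simp only [if_pos (show a ≤ i+1 ∧ i+1 ≤ b by omega)] at hx
        have := hq1 i (by omega) (by omega) x hx
        rw [Gm_eq M i h1 h2] at this
        simpa only [if_pos (show a ≤ i ∧ i ≤ b by omega)] using this
      · simp only [if_neg (show ¬(a ≤ i ∧ i ≤ b) by omega)]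
        exact Submodule.mem_top
    · have hx0 : x = 0 := hbig (i+1) (by omega) x
      rw [hx0, map_zero]
      exact Submodule.zero_mem _
  have hcompl : ∀ i, IsCompl (Submodule.span k {w i}) ((fun i => if a ≤ i ∧ i ≤ b then q i else ⊤) i) := by
    intro i
    by_cases hi : a ≤ i ∧ i ≤ b
    · simpa only [if_pos hi] using hq2 i (by omega) hi.2
    · have hwi : w i = 0 := by
        rcases (show i < a ∨ b < i by omega) with h | h
        · exact hmin i h
        · exact hwhigh i h
      simp only [if_neg hi, hwi, Submodule.span_zero_singleton]
      exact isCompl_bot_top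
  rcases hM.2 _ _ hsubp hsubq hcompl with hc | hc
  · exfalso
    have := hc b
    rw [Submodule.span_singleton_eq_bot, hwb] at this
    exact hv this
  · have hp : ∀ i, Submodule.span k {w i} = ⊤ := by
      intro i
      have h1 := (hcompl i).codisjoint
      rw [codisjoint_iff] at h1
      beta_reduce at h1
      rw [hc i, sup_bot_eq] at h1
      exact h1
    refine ⟨a, b, ha1, hab, hbn, ?_, ?_⟩
    · intro i
      by_cases hi : a ≤ i ∧ i ≤ b
      · rw [if_pos hi]
        exact (finrank_eq_one_iff_of_nonzero (w i) (hnonzero i hi.1 hi.2)).mpr (hp i)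
      · rw [if_neg hi]
        have hwi : w i = 0 := by
          rcases (show i < a ∨ b < i by omega) with h | h
          · exact hmin i h
          · exact hwhigh i h
        have hsub : Subsingleton (M.V i) := by
          constructor
          intro x y
          have hx : x ∈ Submodule.span k {w i} := by rw [hp i]; exact Submodule.mem_top
          have hy : y ∈ Submodule.span k {w i} := by rw [hp i]; exact Submodule.mem_top
          rw [hwi, Submodule.span_zero_singleton, Submodule.mem_bot] at hx hy
          rw [hx, hy]
        haveI := M.fd i
        exact Module.finrank_zero_iff.mpr hsub
    · intro i h1 h2 h3 h4
      have hwi : w i ≠ 0 := hnonzero i h3 (by omega)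
      constructor
      · intro x y hxy
        have hmem : x - y ∈ Submodule.span k {w (i+1)} := by
          rw [hp (i+1)]; exact Submodule.mem_top
        obtain ⟨c, hc2⟩ := Submodule.mem_span_singleton.mp hmem
        have h0 : M.g i h1 h2 (x - y) = 0 := by rw [map_sub, hxy, sub_self]
        rw [← hc2, map_smul, ← Gm_eq M i h1 h2, ← hw2 i (by omega)] at h0
        have hc0 : c = 0 := by
          rcases smul_eq_zero.mp h0 with h | h
          · exact h
          · exact absurd h hwi
        have : x - y = 0 := by rw [← hc2, hc0, zero_smul]
        exact sub_eq_zero.mp this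
      · intro y
        have hmem : y ∈ Submodule.span k {w i} := by rw [hp i]; exact Submodule.mem_top
        obtain ⟨c, hc2⟩ := Submodule.mem_span_singleton.mp hmem
        refine ⟨c • w (i+1), ?_⟩
        rw [map_smul, ← Gm_eq M i h1 h2, ← hw2 i (by omega), hc2]

lemma interval_end (M : AnRep k n) (a b : ℕ) (ha : 1 ≤ a) (hab : a ≤ b) (hb : b ≤ n)
    (hI : IsInterval M a b) (φ : AnEnd M) :
    ∃! c : k, ∀ i (x : M.V i), φ.f i x = c • x := by
  have hra : Module.finrank k (M.V a) = 1 := by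
    rw [hI.1 a, if_pos ⟨le_rfl, hab⟩]
  haveI := M.fd a
  obtain ⟨e, he0, hspan⟩ := finrank_eq_one_iff'.mp hra
  obtain ⟨c, hc⟩ := hspan (φ.f a e)
  have hA : ∀ x : M.V a, φ.f a x = c • x := by
    intro x
    obtain ⟨t, ht⟩ := hspan x
    rw [← ht, map_smul, ← hc, smul_comm]
  have hup : ∀ m, a + m ≤ b → ∀ x : M.V (a+m), φ.f (a+m) x = c • x := by
    intro m
    induction m with
    | zero => exact fun _ => hA
    | succ m ih =>
      intro hle x
      have h1 : 1 ≤ a + m := by omega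
      have h2 : a + m + 1 ≤ n := by omega
      have hbij := hI.2 (a+m) h1 h2 (by omega) (by omega)
      apply hbij.1
      have hcm := LinearMap.congr_fun (φ.comm (a+m) h1 h2) x
      simp only [LinearMap.comp_apply] at hcm
      have hcm' : φ.f (a+m) (M.g (a+m) h1 h2 x) = M.g (a+m) h1 h2 (φ.f (a+(m+1)) x) := hcm
      rw [← hcm', ih (by omega), map_smul]
  refine ⟨c, ?_, ?_⟩
  · intro i x
    by_cases hi : a ≤ i ∧ i ≤ b
    · have := hup (i - a) (by omega)
      rw [show a + (i - a) = i by omega] at this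
      exact this x
    · have hri : Module.finrank k (M.V i) = 0 := by rw [hI.1 i, if_neg hi]
      haveI := M.fd i
      haveI : Subsingleton (M.V i) := Module.finrank_zero_iff.mp hri
      exact Subsingleton.elim _ _
  · intro c' h'
    have h1 := h' a e
    have h2 : c' • e = c • e := by rw [← h1, ← hc]
    by_contra hne
    exact he0 (by
      have := sub_eq_zero.mpr h2
      rw [← sub_smul] at this
      rcases smul_eq_zero.mp this with h | h
      · exact absurd (sub_eq_zero.mp h) hne
      · exact h)

lemma interval_unique (M : AnRep k n) (a b a' b' : ℕ) (hI : IsInterval M a b)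
    (hI' : IsInterval M a' b') (ha : 1 ≤ a) (hab : a ≤ b) (hb : b ≤ n)
    (ha' : 1 ≤ a') (hab' : a' ≤ b') (hb' : b' ≤ n) : a = a' ∧ b = b' := by
  have h := fun i => (hI.1 i).symm.trans (hI'.1 i)
  have h1 := h a
  have h2 := h a'
  have h3 := h b
  have h4 := h b'
  split_ifs at h1 h2 h3 h4 <;> omega

lemma count_intervals (n : ℕ) :
    Nat.card {p : ℕ × ℕ // 1 ≤ p.1 ∧ p.1 ≤ p.2 ∧ p.2 ≤ n} = n * (n+1) / 2 := by
  have e : {p : ℕ × ℕ // 1 ≤ p.1 ∧ p.1 ≤ p.2 ∧ p.2 ≤ n} ≃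
      {p : Fin n × Fin n // p.1 ≤ p.2} :=
    { toFun := fun x => ⟨(⟨x.1.1 - 1, by omega⟩, ⟨x.1.2 - 1, by omega⟩), by
        have := x.2
        simp only [Fin.mk_le_mk]
        omega⟩
      invFun := fun x => ⟨(x.1.1 + 1, x.1.2 + 1), by
        have := x.2
        have h1 := x.1.1.2
        have h2 := x.1.2.2
        rw [Fin.le_def] at this
        simp only
        omega⟩
      left_inv := by
        rintro ⟨⟨u, v⟩, h⟩
        ext <;> simp <;> omega
      right_inv := by
        rintro ⟨⟨⟨u, hu⟩, ⟨v, hv⟩⟩, h⟩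
        ext <;> simp }
  rw [Nat.card_congr e, Nat.card_congr Sym2.sortEquiv.symm, Nat.card_eq_fintype_card,
    Sym2.card]
  simp [Nat.choose_two_right, Nat.mul_comm]

/-- every indecomposable representation of linear A_n is an interval
module M[a,b] with 1 ≤ a ≤ b ≤ n; each interval module has endomorphism ring k
(every endomorphism is a unique scalar); interval modules for distinct intervals
are non-isomorphic; hence there are exactly n(n+1)/2 isomorphism classes of
indecomposables. -/
theorem stmt5 (k : Type) [Field k] (n : ℕ) (hn : 1 ≤ n) :
    (∀ M : AnRep k n, AnIndec M →
      ∃ a b, 1 ≤ a ∧ a ≤ b ∧ b ≤ n ∧ IsInterval M a b) ∧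
    (∀ (M : AnRep k n) (a b : ℕ), 1 ≤ a → a ≤ b → b ≤ n → IsInterval M a b →
      ∀ φ : AnEnd M, ∃! c : k, ∀ i (x : M.V i), φ.f i x = c • x) ∧
    (∀ (M : AnRep k n) (a b a' b' : ℕ), IsInterval M a b → IsInterval M a' b' →
      1 ≤ a → a ≤ b → b ≤ n → 1 ≤ a' → a' ≤ b' → b' ≤ n → a = a' ∧ b = b') ∧
    Nat.card {p : ℕ × ℕ // 1 ≤ p.1 ∧ p.1 ≤ p.2 ∧ p.2 ≤ n} = n * (n+1) / 2 := by
  exact ⟨fun M hM => indec_interval M hM,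
    fun M a b ha hab hb hI φ => interval_end M a b ha hab hb hI φ,
    fun M a b a' b' hI hI' ha hab hb ha' hab' hb' =>
      interval_unique M a b a' b' hI hI' ha hab hb ha' hab' hb',
    count_intervals n⟩
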